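/- Let G be a group, X a Hausdorff locally compact paracompact space, φ : G ↷ X a properly discontinuous and cocompact action by homeomorphisms and x₀ ∈ X. Then the map φ_{x₀} : (G, ε_G) → (X, ε_φ) defined by φ_{x₀}(g) = φ(g, x₀) is a coarse equivalence. -/
import Mathlib


namespace Paper

open Set Topology

/-! ### Coarse structures -/

/-- The inverse of a relation `e ⊆ X × X`. -/
def invRel {X : Type*} (e : Set (X × X)) : Set (X × X) := {p | (p.2, p.1) ∈ e}

/-- The composition of relations: `compRel e e' = {(a,b) | ∃ c, (a,c) ∈ e ∧ (c,b) ∈ e'}`.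
This is `e' ∘ e` in the paper's notation. -/
def compRel {X : Type*} (e e' : Set (X × X)) : Set (X × X) :=
  {p | ∃ c, (p.1, c) ∈ e ∧ (c, p.2) ∈ e'}

/-- A coarse structure on a set `X`. -/
def IsCoarseStructure {X : Type*} (ε : Set (Set (X × X))) : Prop :=
  Set.diagonal X ∈ ε ∧
  (∀ e ∈ ε, ∀ e' : Set (X × X), e' ⊆ e → e' ∈ ε) ∧
  (∀ e ∈ ε, ∀ e' ∈ ε, e ∪ e' ∈ ε) ∧
  (∀ e ∈ ε, invRel e ∈ ε) ∧
  (∀ e ∈ ε, ∀ e' ∈ ε, compRel e e' ∈ ε)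

/-- The coarse structure generated by a family `A` of subsets of `X × X`:
the intersection of all coarse structures containing `A`. -/
def genCoarse {X : Type*} (A : Set (Set (X × X))) : Set (Set (X × X)) :=
  ⋂₀ {ε | IsCoarseStructure ε ∧ A ⊆ ε}

/-- The `u`-neighbourhood `𝔅(B, u)` of a subset `B`. -/
def Bnh {X : Type*} (B : Set X) (u : Set (X × X)) : Set X := {x | ∃ y ∈ B, (x, y) ∈ u}

/-- A subset `B` is bounded for the coarse structure `ε` if `B × B ∈ ε`. -/
def CBounded {X : Type*} (ε : Set (Set (X × X))) (B : Set X) : Prop := B ×ˢ B ∈ ε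

/-- A map is bornologous if it sends entourages to entourages. -/
def Bornologous {X Y : Type*} (ε : Set (Set (X × X))) (ζ : Set (Set (Y × Y)))
    (f : X → Y) : Prop :=
  ∀ e ∈ ε, Prod.map f f '' e ∈ ζ

/-- A map is (coarsely) proper if preimages of bounded sets are bounded. -/
def CProper {X Y : Type*} (ε : Set (Set (X × X))) (ζ : Set (Set (Y × Y)))
    (f : X → Y) : Prop :=
  ∀ B : Set Y, CBounded ζ B → CBounded ε (f ⁻¹' B)

/-- A coarse map is a proper bornologous map. -/
def CoarseMap {X Y : Type*} (ε : Set (Set (X × X))) (ζ : Set (Set (Y × Y)))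
    (f : X → Y) : Prop :=
  Bornologous ε ζ f ∧ CProper ε ζ f

/-- Two maps `f g : S → X` are close if `{(f s, g s) | s ∈ S}` is an entourage. -/
def Close {S X : Type*} (ε : Set (Set (X × X))) (f g : S → X) : Prop :=
  Set.range (fun s => (f s, g s)) ∈ ε

/-- A coarse equivalence: a coarse map with a coarse quasi-inverse. -/
def CoarseEquiv {X Y : Type*} (ε : Set (Set (X × X))) (ζ : Set (Set (Y × Y)))
    (f : X → Y) : Prop :=
  CoarseMap ε ζ f ∧
    ∃ g : Y → X, CoarseMap ζ ε g ∧ Close ζ (f ∘ g) id ∧ Close ε (g ∘ f) id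

/-- The subspace coarse structure on `A ⊆ Y`. -/
def SubCoarse {Y : Type*} (ζ : Set (Set (Y × Y))) (A : Set Y) : Set (Set (↥A × ↥A)) :=
  {e | Prod.map (Subtype.val : A → Y) (Subtype.val : A → Y) '' e ∈ ζ}

/-- A coarse embedding: a coarse map which is a coarse equivalence onto its image with
the subspace coarse structure. -/
def CoarseEmbedding {X Y : Type*} (ε : Set (Set (X × X))) (ζ : Set (Set (Y × Y)))
    (f : X → Y) : Prop :=
  CoarseMap ε ζ f ∧ CoarseEquiv ε (SubCoarse ζ (Set.range f)) (Set.rangeFactorization f)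

/-- A coarse space is coarsely connected if every pair lies in some entourage. -/
def CoarselyConnected {X : Type*} (ε : Set (Set (X × X))) : Prop :=
  ∀ x y : X, ∃ e ∈ ε, (x, y) ∈ e

/-- `A` is quasi-dense if `𝔅(A, e) = X` for some entourage `e`. -/
def QuasiDense {X : Type*} (ε : Set (Set (X × X))) (A : Set X) : Prop :=
  ∃ e ∈ ε, Bnh A e = Set.univ

/-- A subset of a topological space is topologically bounded if its closure is compact. -/
def TopBounded {X : Type*} [TopologicalSpace X] (B : Set X) : Prop := IsCompact (closure B)

/-- A coarse structure on a topological space is proper if it contains a neighbourhood of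
the diagonal and every bounded set is topologically bounded. -/
def ProperCoarse {X : Type*} [TopologicalSpace X] (ε : Set (Set (X × X))) : Prop :=
  (∃ e ∈ ε, e ∈ nhdsSet (Set.diagonal X)) ∧ ∀ B : Set X, CBounded ε B → TopBounded B

/-! ### Artin–Wraith glueings -/

/-- An admissible map `f : Closed(X) → Closed(Y)`. -/
def Admissible {X Y : Type*} [TopologicalSpace X] [TopologicalSpace Y]
    (f : Set X → Set Y) : Prop :=
  (∀ A : Set X, IsClosed A → IsClosed (f A)) ∧
  (∀ A B : Set X, IsClosed A → IsClosed B → f (A ∪ B) = f A ∪ f B) ∧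
  f ∅ = ∅

/-- The closed sets of the Artin–Wraith glueing `X +_f Y`. -/
def AWClosed {X Y : Type*} [TopologicalSpace X] [TopologicalSpace Y]
    (f : Set X → Set Y) : Set (Set (X ⊕ Y)) :=
  {A | IsClosed (Sum.inl ⁻¹' A) ∧ IsClosed (Sum.inr ⁻¹' A) ∧
    Sum.inr '' f (Sum.inl ⁻¹' A) ⊆ A}

/-- The topology of the Artin–Wraith glueing `X +_f Y` on `X ⊕ Y`. (For admissible `f`,
the closed sets of this topology are exactly the members of `AWClosed f`.) -/
def AWTop {X Y : Type*} [TopologicalSpace X] [TopologicalSpace Y]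
    (f : Set X → Set Y) : TopologicalSpace (X ⊕ Y) :=
  TopologicalSpace.generateFrom (compl '' AWClosed f)

/-- `X +_f W` is a (Hausdorff) compactification of `X`: a compact Hausdorff Artin–Wraith
glueing in which `X` is dense. -/
def IsCompactification {X W : Type*} [TopologicalSpace X] [TopologicalSpace W]
    (f : Set X → Set W) : Prop :=
  Admissible f ∧
  @CompactSpace (X ⊕ W) (AWTop f) ∧
  @T2Space (X ⊕ W) (AWTop f) ∧
  @Dense (X ⊕ W) (AWTop f) (Set.range Sum.inl)

/-- A relation `e ⊆ X × X` is proper if `𝔅(B,e)` and `𝔅(B,e⁻¹)` are topologically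
bounded for every topologically bounded `B`. -/
def ProperRel {X : Type*} [TopologicalSpace X] (e : Set (X × X)) : Prop :=
  ∀ B : Set X, TopBounded B → TopBounded (Bnh B e) ∧ TopBounded (Bnh B (invRel e))

/-- `e` is a perspective subset of `X × X` with respect to the compactification `X +_f W`. -/
def PerspRel {X W : Type*} [TopologicalSpace X] [TopologicalSpace W]
    (f : Set X → Set W) (e : Set (X × X)) : Prop :=
  ProperRel e ∧
  ∀ y : W, ∀ V : Set (X ⊕ W), IsOpen[AWTop f] V → Sum.inr y ∈ V →
    ∃ U : Set (X ⊕ W), IsOpen[AWTop f] U ∧ Sum.inr y ∈ U ∧ U ⊆ V ∧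
      ∀ p ∈ e, Sum.inl p.1 ∈ U → Sum.inl p.2 ∈ V

/-- A perspective compactification of the coarse space `(X, ε)`. -/
def PerspCompactification {X W : Type*} [TopologicalSpace X] [TopologicalSpace W]
    (ε : Set (Set (X × X))) (f : Set X → Set W) : Prop :=
  IsCompactification f ∧ ∀ e ∈ ε, PerspRel f e

/-- The pullback of `f : Closed(X) → Closed(W)` with respect to `π : Y → X` and
`ϖ : Z → W`. -/
def pullbackAW {X Y Z W : Type*} [TopologicalSpace X] [TopologicalSpace Z]
    (f : Set X → Set W) (π : Y → X) (ϖ : Z → W) (A : Set Y) : Set Z :=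
  closure (ϖ ⁻¹' (f (closure (π '' A))))

/-! ### Group actions -/

/-- `φ : G → X → X` is an action by homeomorphisms. -/
def IsActionByHomeos {G X : Type*} [Group G] [TopologicalSpace X]
    (φ : G → X → X) : Prop :=
  (∀ g : G, Continuous (φ g)) ∧ (∀ x : X, φ 1 x = x) ∧
    ∀ g h : G, ∀ x : X, φ (g * h) x = φ g (φ h x)

/-- A properly discontinuous action. -/
def ProperlyDisc {G X : Type*} [TopologicalSpace X] (φ : G → X → X) : Prop :=
  ∀ K : Set X, IsCompact K → {g : G | (φ g '' K ∩ K).Nonempty}.Finite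

/-- A cocompact action. -/
def CocompactAct {G X : Type*} [TopologicalSpace X] (φ : G → X → X) : Prop :=
  ∃ K : Set X, IsCompact K ∧ (⋃ g : G, φ g '' K) = Set.univ

/-- The saturation `Sat(A) = {(φ(g,x), φ(g,x')) : g ∈ G, x, x' ∈ A}`. -/
def Sat {G X : Type*} (φ : G → X → X) (A : Set X) : Set (X × X) :=
  {p | ∃ g : G, ∃ x ∈ A, ∃ x' ∈ A, p = (φ g x, φ g x')}

/-- The coarse structure `ε_φ` on `X` generated by the saturations of topologically
bounded sets. -/
def coarseOfAction {G X : Type*} [TopologicalSpace X] (φ : G → X → X) :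
    Set (Set (X × X)) :=
  genCoarse {e | ∃ A : Set X, TopBounded A ∧ e = Sat φ A}

/-- The saturation for the left multiplication action of a group on itself. -/
def SatMul {G : Type*} [Group G] (U : Set G) : Set (G × G) :=
  {p | ∃ g : G, ∃ u ∈ U, ∃ u' ∈ U, p = (g * u, g * u')}

/-- The coarse structure `ε_G` on the group `G`, generated by the saturations of
finite subsets under the left multiplication action. -/
def coarseGroup (G : Type*) [Group G] : Set (Set (G × G)) :=
  genCoarse {e | ∃ U : Set G, U.Finite ∧ e = SatMul U}

/-- The compactification `X +_f W` is group-theoretically perspective with respect to the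
action `φ`. -/
def GTPerspective {G X W : Type*} [TopologicalSpace X] [TopologicalSpace W]
    (φ : G → X → X) (f : Set X → Set W) : Prop :=
  ∀ K : Set X, IsCompact K → ∀ y : W, ∀ U : Set (X ⊕ W),
    IsOpen[AWTop f] U → Sum.inr y ∈ U →
      ∃ V : Set (X ⊕ W), IsOpen[AWTop f] V ∧ Sum.inr y ∈ V ∧ V ⊆ U ∧
        ∀ g : G, (∃ x ∈ K, Sum.inl (φ g x) ∈ V) → ∀ x ∈ K, Sum.inl (φ g x) ∈ U

/-! ### Rays and accessibility -/

/-- A family `Ψ` of rays in `X` based at `p`: each member is a pair `(A, γ)` of a closed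
unbounded subset `A ⊆ [0,∞)` containing `0` and a map `γ : ℝ → X` (regarded on `A`) which
is injective on `A`, proper, and satisfies `γ 0 = p`. -/
def GoodRayFamily {X : Type*} [TopologicalSpace X] (p : X)
    (Ψ : Set (Set ℝ × (ℝ → X))) : Prop :=
  ∀ r ∈ Ψ, r.1 ⊆ Set.Ici (0 : ℝ) ∧ IsClosed r.1 ∧ ¬Bornology.IsBounded r.1 ∧
    (0 : ℝ) ∈ r.1 ∧ r.2 0 = p ∧ Set.InjOn r.2 r.1 ∧
    ∀ B : Set X, TopBounded B → Bornology.IsBounded (r.1 ∩ r.2 ⁻¹' B)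

/-- The compactification `X +_f W` is `Ψ`-accessible. -/
def AccessibleComp {X W : Type*} [TopologicalSpace X] [TopologicalSpace W]
    (f : Set X → Set W) (Ψ : Set (Set ℝ × (ℝ → X))) : Prop :=
  (∀ w : W, ∃ r ∈ Ψ, f (closure (r.2 '' r.1)) = {w}) ∧
  ∀ r ∈ Ψ, ∃ w : W, f (closure (r.2 '' r.1)) = {w}


lemma mem_genCoarse_of_subset {X : Type*} {A : Set (Set (X × X))} {a e : Set (X × X)}
    (ha : a ∈ A) (he : e ⊆ a) : e ∈ genCoarse A := by
  rw [genCoarse, Set.mem_sInter]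
  rintro ε ⟨hε, hA⟩
  exact hε.2.1 a (hA ha) e he

lemma topBounded_of_isCompact {X : Type*} [TopologicalSpace X] [T2Space X] {A : Set X}
    (h : IsCompact A) : TopBounded A := by
  rw [TopBounded, h.isClosed.closure_eq]; exact h

lemma groupCS (G : Type*) [Group G] :
    IsCoarseStructure {e : Set (G × G) | ∃ U : Set G, U.Finite ∧ e ⊆ SatMul U} := by
  refine ⟨⟨{1}, Set.finite_singleton 1, ?_⟩, ?_, ?_, ?_, ?_⟩
  · rintro ⟨a, b⟩ hab
    have h : a = b := hab
    exact ⟨a, 1, rfl, 1, rfl, by simp [h]⟩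
  · rintro e ⟨U, hU, heU⟩ e' he'
    exact ⟨U, hU, he'.trans heU⟩
  · rintro e ⟨U, hU, heU⟩ e' ⟨V, hV, heV⟩
    refine ⟨U ∪ V, hU.union hV, ?_⟩
    rintro p (hp | hp)
    · obtain ⟨g, u, hu, u', hu', hpe⟩ := heU hp
      exact ⟨g, u, Set.mem_union_left _ hu, u', Set.mem_union_left _ hu', hpe⟩
    · obtain ⟨g, u, hu, u', hu', hpe⟩ := heV hp
      exact ⟨g, u, Set.mem_union_right _ hu, u', Set.mem_union_right _ hu', hpe⟩
  · rintro e ⟨U, hU, heU⟩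
    refine ⟨U, hU, ?_⟩
    rintro ⟨a, b⟩ hab
    obtain ⟨g, u, hu, u', hu', hpe⟩ := heU hab
    have hb : b = g * u := congrArg Prod.fst hpe
    have ha : a = g * u' := congrArg Prod.snd hpe
    exact ⟨g, u', hu', u, hu, by rw [Prod.ext_iff]; exact ⟨ha, hb⟩⟩
  · rintro e ⟨U, hU, heU⟩ e' ⟨V, hV, heV⟩
    refine ⟨U ∪ (fun q : G × G × G => q.1 * q.2.1⁻¹ * q.2.2) '' (U ×ˢ V ×ˢ V),
      hU.union ((hU.prod (hV.prod hV)).image _), ?_⟩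
    rintro ⟨a, b⟩ ⟨c, hac, hcb⟩
    obtain ⟨g, u, hu, u', hu', h1⟩ := heU hac
    obtain ⟨h, v, hv, v', hv', h2⟩ := heV hcb
    have ha : a = g * u := congrArg Prod.fst h1
    have hc : c = g * u' := congrArg Prod.snd h1
    have hc2 : c = h * v := congrArg Prod.fst h2
    have hb : b = h * v' := congrArg Prod.snd h2
    refine ⟨g, u, Set.mem_union_left _ hu, u' * v⁻¹ * v',
      Set.mem_union_right _ ⟨(u', v, v'), ⟨hu', hv, hv'⟩, rfl⟩, ?_⟩
    rw [Prod.ext_iff]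
    refine ⟨ha, ?_⟩
    have hgu : g * u' = h * v := hc.symm.trans hc2
    have hh : h = g * u' * v⁻¹ := by rw [hgu]; group
    show b = g * (u' * v⁻¹ * v')
    rw [hb, hh]; group

lemma coarseGroup_iff {G : Type*} [Group G] {e : Set (G × G)} :
    e ∈ coarseGroup G ↔ ∃ U : Set G, U.Finite ∧ e ⊆ SatMul U := by
  constructor
  · intro he
    exact Set.mem_sInter.mp he _
      ⟨groupCS G, by rintro a ⟨U, hU, rfl⟩; exact ⟨U, hU, subset_rfl⟩⟩
  · rintro ⟨U, hU, heU⟩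
    exact mem_genCoarse_of_subset ⟨U, hU, rfl⟩ heU

lemma actionCS {G X : Type*} [Group G] [TopologicalSpace X] [T2Space X]
    (φ : G → X → X) (hact : IsActionByHomeos φ) (hpd : ProperlyDisc φ)
    (hcc : CocompactAct φ) :
    IsCoarseStructure {e : Set (X × X) | ∃ A : Set X, TopBounded A ∧ e ⊆ Sat φ A} := by
  obtain ⟨K, hK, hKu⟩ := hcc
  have inv_cancel : ∀ (g : G) (x : X), φ g⁻¹ (φ g x) = x := by
    intro g x
    rw [← hact.2.2, inv_mul_cancel, hact.2.1]
  refine ⟨⟨K, topBounded_of_isCompact hK, ?_⟩, ?_, ?_, ?_, ?_⟩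
  · rintro ⟨a, b⟩ hab
    have h : a = b := hab
    have ha : a ∈ ⋃ g, φ g '' K := hKu ▸ Set.mem_univ a
    obtain ⟨g, k, hk, hgk⟩ := by simpa using ha
    exact ⟨g, k, hk, k, hk, by rw [Prod.ext_iff]; exact ⟨hgk.symm, h ▸ hgk.symm⟩⟩

  · rintro e ⟨A, hA, heA⟩ e' he'
    exact ⟨A, hA, he'.trans heA⟩
  · rintro e ⟨A, hA, heA⟩ e' ⟨B, hB, heB⟩
    refine ⟨A ∪ B, by rw [TopBounded, closure_union]; exact hA.union hB, ?_⟩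
    rintro p (hp | hp)
    · obtain ⟨g, x, hx, x', hx', hpe⟩ := heA hp
      exact ⟨g, x, Set.mem_union_left _ hx, x', Set.mem_union_left _ hx', hpe⟩
    · obtain ⟨g, x, hx, x', hx', hpe⟩ := heB hp
      exact ⟨g, x, Set.mem_union_right _ hx, x', Set.mem_union_right _ hx', hpe⟩
  · rintro e ⟨A, hA, heA⟩
    refine ⟨A, hA, ?_⟩
    rintro ⟨a, b⟩ hab
    obtain ⟨g, x, hx, x', hx', hpe⟩ := heA hab
    have hb : b = φ g x := congrArg Prod.fst hpe
    have ha : a = φ g x' := congrArg Prod.snd hpe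
    exact ⟨g, x', hx', x, hx, by rw [Prod.ext_iff]; exact ⟨ha, hb⟩⟩
  · rintro e ⟨A, hA, heA⟩ e' ⟨B, hB, heB⟩
    set L : Set X := closure A ∪ closure B with hLdef
    have hLc : IsCompact L := hA.union hB
    have hF : {g : G | (φ g '' L ∩ L).Nonempty}.Finite := hpd L hLc
    refine ⟨L ∪ ⋃ s ∈ {g : G | (φ g '' L ∩ L).Nonempty}, φ s '' L,
      topBounded_of_isCompact
        (hLc.union (hF.isCompact_biUnion fun s _ => hLc.image (hact.1 s))), ?_⟩
    rintro ⟨a, b⟩ ⟨c, hac, hcb⟩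
    obtain ⟨g, x, hx, x', hx', h1⟩ := heA hac
    obtain ⟨h, y, hy, y', hy', h2⟩ := heB hcb
    have ha : a = φ g x := congrArg Prod.fst h1
    have hc : c = φ g x' := congrArg Prod.snd h1
    have hc2 : c = φ h y := congrArg Prod.fst h2
    have hb : b = φ h y' := congrArg Prod.snd h2
    have hsy : φ (g⁻¹ * h) y = x' := by
      rw [hact.2.2, ← hc2, hc]; exact inv_cancel g x'
    have hs : (g⁻¹ * h) ∈ {t : G | (φ t '' L ∩ L).Nonempty} :=
      ⟨x', ⟨y, Set.mem_union_right _ (subset_closure hy), hsy⟩,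
        Set.mem_union_left _ (subset_closure hx')⟩
    refine ⟨g, x, Set.mem_union_left _ (Set.mem_union_left _ (subset_closure hx)),
      φ (g⁻¹ * h) y',
      Set.mem_union_right _
        (Set.mem_biUnion hs ⟨y', Set.mem_union_right _ (subset_closure hy'), rfl⟩), ?_⟩
    rw [Prod.ext_iff]
    refine ⟨ha, ?_⟩
    show b = φ g (φ (g⁻¹ * h) y')
    rw [hb, ← hact.2.2, mul_inv_cancel_left]

lemma coarseAction_iff {G X : Type*} [Group G] [TopologicalSpace X] [T2Space X]
    {φ : G → X → X} (hact : IsActionByHomeos φ) (hpd : ProperlyDisc φ)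
    (hcc : CocompactAct φ) {e : Set (X × X)} :
    e ∈ coarseOfAction φ ↔ ∃ A : Set X, TopBounded A ∧ e ⊆ Sat φ A := by
  constructor
  · intro he
    exact Set.mem_sInter.mp he _
      ⟨actionCS φ hact hpd hcc, by rintro a ⟨A, hA, rfl⟩; exact ⟨A, hA, subset_rfl⟩⟩
  · rintro ⟨A, hA, heA⟩
    exact mem_genCoarse_of_subset ⟨A, hA, rfl⟩ heA

/-- if moreover the action is cocompact, the orbit map `g ↦ φ(g, x₀)` is a
coarse equivalence `(G, ε_G) → (X, ε_φ)`. -/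
theorem stmt9 {G X : Type*} [Group G] [TopologicalSpace X] [T2Space X]
    [LocallyCompactSpace X] [ParacompactSpace X]
    (φ : G → X → X) (hact : IsActionByHomeos φ) (hpd : ProperlyDisc φ)
    (hcc : CocompactAct φ) (x₀ : X) :
    CoarseEquiv (coarseGroup G) (coarseOfAction φ) (fun g => φ g x₀) := by
  have act_mul := hact.2.2
  have inv_cancel : ∀ (g : G) (x : X), φ g⁻¹ (φ g x) = x := by
    intro g x; rw [← act_mul, inv_mul_cancel, hact.2.1]
  obtain ⟨K₀, hK₀, hK₀u⟩ := hcc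
  have hccK : CocompactAct φ := ⟨K₀, hK₀, hK₀u⟩
  set K : Set X := insert x₀ K₀ with hKdef
  have hK : IsCompact K := hK₀.insert x₀
  have hx₀K : x₀ ∈ K := Set.mem_insert _ _
  have hKcov : ∀ x : X, ∃ g : G, ∃ k, k ∈ K ∧ φ g k = x := by
    intro x
    have hx : x ∈ ⋃ g, φ g '' K₀ := hK₀u ▸ Set.mem_univ x
    obtain ⟨g, k, hk, hgk⟩ := by simpa using hx
    exact ⟨g, k, Set.mem_insert_of_mem _ hk, hgk⟩
  choose ψ kf hkf hψ using hKcov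
  have memX : ∀ {e : Set (X × X)} (A : Set X), TopBounded A → e ⊆ Sat φ A →
      e ∈ coarseOfAction φ :=
    fun A hA he => (coarseAction_iff hact hpd hccK).mpr ⟨A, hA, he⟩
  have memG : ∀ {e : Set (G × G)} (U : Set G), U.Finite → e ⊆ SatMul U →
      e ∈ coarseGroup G :=
    fun U hU he => coarseGroup_iff.mpr ⟨U, hU, he⟩
  have key : ∀ z : X, φ (ψ z)⁻¹ z = kf z := fun z =>
    ((congrArg (φ (ψ z)⁻¹) (hψ z)).symm).trans (inv_cancel (ψ z) (kf z))
  refine ⟨⟨?_, ?_⟩, ψ, ⟨?_, ?_⟩, ?_, ?_⟩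
  · -- Bornologous f
    intro e he
    obtain ⟨U, hU, heU⟩ := coarseGroup_iff.mp he
    apply memX ((fun u => φ u x₀) '' U)
      (topBounded_of_isCompact (hU.image _).isCompact)
    rintro p ⟨⟨a, b⟩, hq, rfl⟩
    obtain ⟨g, u, hu, u', hu', hpe⟩ := heU hq
    have ha : a = g * u := congrArg Prod.fst hpe
    have hb : b = g * u' := congrArg Prod.snd hpe
    refine ⟨g, φ u x₀, ⟨u, hu, rfl⟩, φ u' x₀, ⟨u', hu', rfl⟩, ?_⟩
    rw [Prod.ext_iff]
    exact ⟨by show φ a x₀ = _; rw [ha, act_mul], by show φ b x₀ = _; rw [hb, act_mul]⟩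
  · -- CProper f
    intro B hB
    obtain ⟨A, hA, hBA⟩ := (coarseAction_iff hact hpd hccK).mp hB
    set L : Set X := insert x₀ (closure A) with hLdef
    have hLc : IsCompact L := hA.insert x₀
    apply memG {t : G | (φ t '' L ∩ L).Nonempty} (hpd L hLc)
    rintro ⟨g, h⟩ ⟨hg, hh⟩
    have hpair : (φ g x₀, φ h x₀) ∈ Sat φ A := hBA ⟨hg, hh⟩
    obtain ⟨s, a, haA, a', haA', hpe⟩ := hpair
    have h1 : φ g x₀ = φ s a := congrArg Prod.fst hpe
    have h2 : φ h x₀ = φ s a' := congrArg Prod.snd hpe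
    have hm1 : s⁻¹ * g ∈ {t : G | (φ t '' L ∩ L).Nonempty} := by
      refine ⟨a, ⟨x₀, Set.mem_insert _ _, ?_⟩,
        Set.mem_insert_of_mem _ (subset_closure haA)⟩
      rw [act_mul, h1]; exact inv_cancel s a
    have hm2 : s⁻¹ * h ∈ {t : G | (φ t '' L ∩ L).Nonempty} := by
      refine ⟨a', ⟨x₀, Set.mem_insert _ _, ?_⟩,
        Set.mem_insert_of_mem _ (subset_closure haA')⟩
      rw [act_mul, h2]; exact inv_cancel s a'
    exact ⟨s, s⁻¹ * g, hm1, s⁻¹ * h, hm2, by rw [Prod.ext_iff]; constructor <;> simp⟩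
  · -- Bornologous ψ
    intro e he
    obtain ⟨A, hA, heA⟩ := (coarseAction_iff hact hpd hccK).mp he
    set L : Set X := closure A ∪ K with hLdef
    have hLc : IsCompact L := hA.union hK
    apply memG {t : G | (φ t '' L ∩ L).Nonempty} (hpd L hLc)
    rintro p ⟨⟨a, b⟩, hq, rfl⟩
    obtain ⟨g, x, hx, x', hx', hpe⟩ := heA hq
    have ha : a = φ g x := congrArg Prod.fst hpe
    have hb : b = φ g x' := congrArg Prod.snd hpe
    have hmem : ∀ (z w : X), z = φ g w → w ∈ A →
        g⁻¹ * ψ z ∈ {t : G | (φ t '' L ∩ L).Nonempty} := by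
      intro z w hz hwA
      refine ⟨w, ⟨kf z, Set.mem_union_right _ (hkf z), ?_⟩,
        Set.mem_union_left _ (subset_closure hwA)⟩
      rw [act_mul, hψ z, hz]; exact inv_cancel g w
    refine ⟨g, g⁻¹ * ψ a, hmem a x ha hx, g⁻¹ * ψ b, hmem b x' hb hx', ?_⟩
    rw [Prod.ext_iff]
    constructor <;> · show ψ _ = _; simp
  · -- CProper ψ
    intro B hB
    obtain ⟨U, hU, hBU⟩ := coarseGroup_iff.mp hB
    apply memX (⋃ u ∈ U, φ u '' K)
      (topBounded_of_isCompact (hU.isCompact_biUnion fun u _ => hK.image (hact.1 u)))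
    rintro ⟨x, y⟩ ⟨hx, hy⟩
    obtain ⟨t, u, hu, u', hu', hpe⟩ := hBU (⟨hx, hy⟩ : (ψ x, ψ y) ∈ B ×ˢ B)
    have h1 : ψ x = t * u := congrArg Prod.fst hpe
    have h2 : ψ y = t * u' := congrArg Prod.snd hpe
    refine ⟨t, φ u (kf x), Set.mem_biUnion hu ⟨kf x, hkf x, rfl⟩,
      φ u' (kf y), Set.mem_biUnion hu' ⟨kf y, hkf y, rfl⟩, ?_⟩
    rw [Prod.ext_iff]
    constructor
    · show x = φ t (φ u (kf x))
      conv_lhs => rw [← hψ x]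
      rw [h1, act_mul]
    · show y = φ t (φ u' (kf y))
      conv_lhs => rw [← hψ y]
      rw [h2, act_mul]
  · -- Close (f ∘ ψ) id
    apply memX K (topBounded_of_isCompact hK)
    rintro p ⟨x, rfl⟩
    exact ⟨ψ x, x₀, hx₀K, kf x, hkf x, by rw [Prod.ext_iff]; exact ⟨rfl, (hψ x).symm⟩⟩
  · -- Close (ψ ∘ f) id
    apply memG (insert 1 {t : G | (φ t '' K ∩ K).Nonempty}) ((hpd K hK).insert 1)
    rintro p ⟨g, rfl⟩
    have hmem : (ψ (φ g x₀))⁻¹ * g ∈ {t : G | (φ t '' K ∩ K).Nonempty} := by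
      refine ⟨kf (φ g x₀), ⟨x₀, hx₀K, ?_⟩, hkf _⟩
      rw [act_mul]; exact key (φ g x₀)
    refine ⟨ψ (φ g x₀), 1, Set.mem_insert _ _, (ψ (φ g x₀))⁻¹ * g,
      Set.mem_insert_of_mem _ hmem, ?_⟩
    rw [Prod.ext_iff]
    constructor <;> simp

end Paper
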